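/- Let N > 0 be an integer and let α ∈ ℚ^f be the unique vector with E·α = Γ(N). Then for every d > 0, W_d(N) ≠ ∅ if and only if min_{0 ≤ i ≤ f−1} α_i ≥ d − 1. -/
import Mathlib


open Polynomial

/-- The power sum `S_d(-k) = ∑_{a monic, deg a = d} a^k`, written as a sum over the
lower-order coefficients of the monic polynomial. -/
noncomputable def powerSum (Fq : Type) [Field Fq] [Fintype Fq] (d k : ℕ) : Polynomial Fq :=
  ∑ c : Fin d → Fq, (X ^ d + ∑ i : Fin d, C (c i) * X ^ (i : ℕ)) ^ k

/-- `m` sums to `k` with no carrying of digits in base `p`. -/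
def NoCarry (p : ℕ) {n : ℕ} (m : Fin n → ℕ) (k : ℕ) : Prop :=
  (∑ i, m i) = k ∧ ∀ j : ℕ, (∑ i, m i / p ^ j % p) = k / p ^ j % p

/-- The set `U_d(k)`. -/
def Uset (p q d k : ℕ) : Set (Fin (d + 1) → ℕ) :=
  {m | NoCarry p m k ∧ ∀ i : Fin (d + 1), 0 < (i : ℕ) → 0 < m i ∧ (q - 1) ∣ m i}

/-- The weight of an element of `U_d(k)`. -/
def wtU {d : ℕ} (m : Fin (d + 1) → ℕ) : ℕ :=
  ∑ i : Fin (d + 1), (d - (i : ℕ)) * m i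

/-- Strict lexicographic order on tuples. -/
def LexLT {n : ℕ} (x y : Fin n → ℕ) : Prop :=
  ∃ i, (∀ j, j < i → x j = y j) ∧ x i < y i

/-- Lexicographic order on tuples. -/
def LexLE {n : ℕ} (x y : Fin n → ℕ) : Prop := x = y ∨ LexLT x y

/-- `L_k := min_{0 ≤ i < f} l(k p^i)/(q-1)` where `l` is the base-`q` digit sum, `q = p^f`. -/
noncomputable def Lval (p f k : ℕ) (hf : 0 < f) : ℚ :=
  (Finset.range f).inf' ⟨0, Finset.mem_range.mpr hf⟩
    (fun i => ((Nat.digits (p ^ f) (k * p ^ i)).sum : ℚ) / ((p : ℚ) ^ f - 1))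

/-- The set `W_d(N)` of compositions. -/
def Wset (p q d N : ℕ) : Set (Fin d → ℕ) :=
  {Y | NoCarry p Y N ∧ ∀ i : Fin d, (i : ℕ) + 1 < d → 0 < Y i ∧ (q - 1) ∣ Y i}

/-- The weight of a composition. -/
def wtW {d : ℕ} (Y : Fin d → ℕ) : ℕ := ∑ i : Fin d, ((i : ℕ) + 1) * Y i

/-- `X` is the modest (lexicographically largest) composition in `W_d(N)`. -/
def Modest (p q : ℕ) {d : ℕ} (N : ℕ) (X : Fin d → ℕ) : Prop :=
  X ∈ Wset p q d N ∧ ∀ Y ∈ Wset p q d N, LexLE Y X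

/-- `X` is an optimal (minimum weight) composition in `W_d(N)`. -/
def Optimal (p q : ℕ) {d : ℕ} (N : ℕ) (X : Fin d → ℕ) : Prop :=
  X ∈ Wset p q d N ∧ ∀ Y ∈ Wset p q d N, wtW X ≤ wtW Y

/-- `Γ(n) : Fin f → ℕ`, summing the base-`p` digits of `n` in each residue class mod `f`. -/
def Gamma (p f n : ℕ) : Fin f → ℕ :=
  fun i => ∑ j ∈ Finset.range (Nat.log p n + 1), if j % f = (i : ℕ) then n / p ^ j % p else 0

/-- The cyclic matrix `E`, as a map: `(E x)_i = p x_{i+1} - x_i`, indices mod `f`. -/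
def Emap (p : ℕ) {R : Type} [Ring R] {f : ℕ} (x : Fin f → R) : Fin f → R :=
  fun i => (p : R) * x ⟨((i : ℕ) + 1) % f, Nat.mod_lt _ i.pos⟩ - x i

/-- `𝔍 = {Γ(n) : n > 0 is q-even}`, where `q = p ^ f`. -/
def Jfrak (p f : ℕ) : Set (Fin f → ℕ) :=
  {w | ∃ n : ℕ, 0 < n ∧ (p ^ f - 1) ∣ n ∧ Gamma p f n = w}

/-- `I_d`. -/
def Iset (p f d : ℕ) : Set (Fin f → ℕ) :=
  {u | (∃ n : ℕ, 0 < n ∧ Gamma p f n = u) ∧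
    ∃ v : Fin (d - 1) → Fin f → ℕ, (∀ j, v j ∈ Jfrak p f) ∧ (∑ j, v j) < u}

/-- `J_d`. -/
def Jset (p f d : ℕ) : Set (Fin f → ℕ) :=
  if d = 0 then ∅ else Jfrak p f ∩ (Iset p f d \ Iset p f (d + 1))

/-- A composition is `τ`-monotonic. -/
def TauMonotonic (p f : ℕ) {d : ℕ} (X : Fin d → ℕ) : Prop :=
  ∀ i j : Fin d, i < j → ∀ m n : ℕ, X i / p ^ m % p ≠ 0 → X j / p ^ n % p ≠ 0 →
    m % f = n % f → n ≤ m

/-- `W_d^B(N)`: compositions in `W_d(N)` whose `Γ`-matrix is `B`. -/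
def WBset (p f d N : ℕ) (B : Fin d → Fin f → ℕ) : Set (Fin d → ℕ) :=
  {Y | Y ∈ Wset p (p ^ f) d N ∧ ∀ j, Gamma p f (Y j) = B j}

/-- The multizeta value `ζ(-k_1, …, -k_r)` as a (finite) sum over strictly
decreasing tuples of degrees. -/
noncomputable def multizeta (Fq : Type) [Field Fq] [Fintype Fq] {r : ℕ} (k : Fin r → ℕ) :
    Polynomial Fq :=
  ∑ᶠ (dt : Fin r → ℕ) (_ : StrictAnti dt), ∏ i, powerSum Fq (dt i) (k i)

namespace S16

def dig (p j n : ℕ) : ℕ := n / p ^ j % p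

lemma dig_lt {p : ℕ} (hp : 0 < p) (j n : ℕ) : dig p j n < p := Nat.mod_lt _ hp

lemma dig_eq_zero_of_lt {p j n : ℕ} (h : n < p ^ j) : dig p j n = 0 := by
  simp [dig, Nat.div_eq_of_lt h]

lemma dig_zero (p n : ℕ) : dig p 0 n = n % p := by simp [dig]

lemma dig_succ (p j n : ℕ) : dig p (j+1) n = dig p j (n / p) := by
  simp [dig, pow_succ, Nat.div_div_eq_div_mul, mul_comm]

lemma sum_dig {p : ℕ} (hp : 2 ≤ p) :
    ∀ (M n : ℕ), n < p ^ M → ∑ j ∈ Finset.range M, dig p j n * p ^ j = n := by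
  intro M
  induction M with
  | zero => intro n hn; simp only [pow_zero, Nat.lt_one_iff] at hn; subst hn; simp
  | succ M ih =>
    intro n hn
    rw [Finset.sum_range_succ']
    have h1 : ∀ j, dig p (j+1) n * p ^ (j+1) = p * (dig p j (n / p) * p ^ j) := by
      intro j; rw [dig_succ]; ring
    simp only [h1, ← Finset.mul_sum]
    have hdiv : n / p < p ^ M := by
      rw [Nat.div_lt_iff_lt_mul (by omega)]
      calc n < p ^ (M+1) := hn
      _ = p ^ M * p := by ring
    rw [ih _ hdiv, dig_zero, pow_zero, mul_one]
    exact Nat.div_add_mod n p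


lemma split_sum {p : ℕ} (e : ℕ → ℕ) (M : ℕ) :
    ∑ k ∈ Finset.range (M+1), e k * p ^ k = e 0 + p * ∑ k ∈ Finset.range M, e (k+1) * p ^ k := by
  rw [Finset.sum_range_succ']
  simp only [pow_zero, mul_one, Finset.mul_sum]
  rw [add_comm]
  congr 1
  apply Finset.sum_congr rfl
  intro k _
  ring

lemma dig_sum_eq {p : ℕ} (hp : 2 ≤ p) :
    ∀ (j M : ℕ) (e : ℕ → ℕ), (∀ k, e k < p) →
      dig p j (∑ k ∈ Finset.range M, e k * p ^ k) = if j < M then e j else 0 := by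
  intro j
  induction j with
  | zero =>
    intro M e he
    match M with
    | 0 => simp [dig_zero]
    | M+1 =>
      rw [split_sum, dig_zero, Nat.add_mul_mod_self_left, Nat.mod_eq_of_lt (he 0)]
      simp
  | succ j ih =>
    intro M e he
    match M with
    | 0 => simp only [Finset.range_zero, Finset.sum_empty]; simp [dig]
    | M+1 =>
      rw [split_sum, dig_succ]
      have : (e 0 + p * ∑ k ∈ Finset.range M, e (k+1) * p ^ k) / p
          = ∑ k ∈ Finset.range M, e (k+1) * p ^ k := by
        rw [Nat.add_mul_div_left _ _ (by omega), Nat.div_eq_of_lt (he 0), zero_add]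
      rw [this, ih M (fun k => e (k+1)) (fun k => he (k+1))]
      simp [Nat.succ_lt_succ_iff]


/-- L8 -/
lemma sub_digits {p : ℕ} (hp : 2 ≤ p) {M n x : ℕ} (hn : n < p ^ M) (hx : x < p ^ M)
    (hle : ∀ j, dig p j x ≤ dig p j n) :
    x ≤ n ∧ ∀ j, dig p j x + dig p j (n - x) = dig p j n := by
  set e : ℕ → ℕ := fun j => dig p j n - dig p j x with he
  set y : ℕ := ∑ j ∈ Finset.range M, e j * p ^ j with hy
  have hyx : y + x = n := by
    rw [hy, ← sum_dig hp M x hx, ← Finset.sum_add_distrib]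
    rw [← sum_dig hp M n hn]
    apply Finset.sum_congr rfl
    intro j _
    rw [← add_mul]
    congr 1
    exact Nat.sub_add_cancel (hle j)
  have hxn : x ≤ n := by omega
  have hnx : n - x = y := by omega
  refine ⟨hxn, fun j => ?_⟩
  rw [hnx, hy, dig_sum_eq hp j M e (fun k => lt_of_le_of_lt (Nat.sub_le _ _) (dig_lt (by omega) k n))]
  by_cases hj : j < M
  · simp only [hj, if_true, he]
    exact Nat.add_sub_cancel' (hle j)
  · simp only [hj, if_false]
    have hpj : n < p ^ j := lt_of_lt_of_le hn (Nat.pow_le_pow_right (by omega) (by omega))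
    have h1 : dig p j n = 0 := by simp [dig, Nat.div_eq_of_lt hpj]
    have h2 : dig p j x = 0 := by
      simp [dig, Nat.div_eq_of_lt (lt_of_le_of_lt hxn hpj)]
    omega

/-- class sums with range M -/
def csm (p f M n i : ℕ) : ℕ := ∑ j ∈ Finset.range M, if j % f = i then dig p j n else 0

/-- the cyclic weighted sum -/
def cn (p f : ℕ) (γ : ℕ → ℕ) (s : ℕ) : ℕ := ∑ t ∈ Finset.range f, p ^ t * γ (s + t)

/-- the class function of a number -/
def gam (p f M n : ℕ) : ℕ → ℕ := fun i => csm p f M n (i % f)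

lemma gam_periodic (p f M n i : ℕ) : gam p f M n (i + f) = gam p f M n i := by
  simp [gam, Nat.add_mod_right]

lemma csm_sum_tuple {p f M n d : ℕ} (Y : Fin d → ℕ)
    (h : ∀ j, ∑ i, dig p j (Y i) = dig p j n) (c : ℕ) :
    ∑ i, csm p f M (Y i) c = csm p f M n c := by
  unfold csm
  rw [Finset.sum_comm]
  apply Finset.sum_congr rfl
  intro j _
  by_cases hc : j % f = c
  · simp [hc, h j]
  · simp [hc]

lemma cn_sum_tuple {p f d : ℕ} (G : Fin d → ℕ → ℕ) (s : ℕ) :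
    cn p f (fun i => ∑ k, G k i) s = ∑ k, cn p f (G k) s := by
  unfold cn
  rw [Finset.sum_comm]
  apply Finset.sum_congr rfl
  intro t _
  rw [Finset.mul_sum]

/-- n ≡ cn (gam n) 0 mod p^f - 1 -/
lemma modeq_cn {p f M n : ℕ} (hp : 2 ≤ p) (hf : 0 < f) (hn : n < p ^ M) :
    n ≡ cn p f (gam p f M n) 0 [MOD p ^ f - 1] := by
  conv_lhs => rw [← sum_dig hp M n hn]
  have key : ∀ j : ℕ, dig p j n * p ^ j ≡ dig p j n * p ^ (j % f) [MOD p ^ f - 1] := by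
    intro j
    apply Nat.ModEq.mul_left
    conv_lhs => rw [← Nat.div_add_mod j f]
    rw [pow_add, pow_mul]
    have h1 : (p ^ f) ^ (j / f) ≡ 1 ^ (j / f) [MOD p ^ f - 1] := by
      apply Nat.ModEq.pow
      have : p ^ f - 1 + 1 = p ^ f := Nat.succ_pred_eq_of_pos (pow_pos (by omega) f)
      calc p ^ f = (p ^ f - 1) + 1 := this.symm
      _ ≡ 0 + 1 [MOD p ^ f - 1] := Nat.ModEq.add_right 1 (Nat.modEq_zero_iff_dvd.mpr dvd_rfl)
      _ = 1 := by ring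
    calc (p ^ f) ^ (j / f) * p ^ (j % f) ≡ 1 ^ (j/f) * p ^ (j % f) [MOD p ^ f - 1] :=
      Nat.ModEq.mul_right _ h1
    _ = p ^ (j % f) := by ring
  have h2 : ∑ j ∈ Finset.range M, dig p j n * p ^ j
      ≡ ∑ j ∈ Finset.range M, dig p j n * p ^ (j % f) [MOD p ^ f - 1] := by
    unfold Nat.ModEq
    rw [Finset.sum_nat_mod, Finset.sum_nat_mod _ _ (fun j => dig p j n * p ^ (j % f))]
    congr 1
    apply Finset.sum_congr rfl
    intro j _
    exact key j
  refine h2.trans (Nat.ModEq.refl _ |>.trans ?_)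
  have h3 : ∑ j ∈ Finset.range M, dig p j n * p ^ (j % f)
      = cn p f (gam p f M n) 0 := by
    have expand : ∀ j ∈ Finset.range M, dig p j n * p ^ (j % f)
        = ∑ t ∈ Finset.range f, (if j % f = t then dig p j n * p ^ t else 0) := by
      intro j _
      rw [Finset.sum_ite_eq]
      simp [Nat.mod_lt j hf]
    rw [Finset.sum_congr rfl expand, Finset.sum_comm]
    unfold cn gam csm
    apply Finset.sum_congr rfl
    intro t ht
    rw [Finset.mul_sum]
    have htf : (0 + t) % f = t := by
      rw [zero_add, Nat.mod_eq_of_lt (Finset.mem_range.mp ht)]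
    rw [htf]
    apply Finset.sum_congr rfl
    intro j _
    by_cases hc : j % f = t
    · simp [hc, mul_comm]
    · simp [hc]
  rw [h3]

/-- step recursion:  γ s + p * c_{s+1} = c_s + p^f γ s -/
lemma cn_step {p f : ℕ} {γ : ℕ → ℕ} (hper : ∀ i, γ (i + f) = γ i) (s : ℕ) :
    γ s + p * cn p f γ (s + 1) = cn p f γ s + p ^ f * γ s := by
  have h1 : ∑ t ∈ Finset.range (f+1), p ^ t * γ (s + t)
      = γ s + p * cn p f γ (s+1) := by
    rw [Finset.sum_range_succ']
    unfold cn
    rw [Finset.mul_sum]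
    simp only [pow_zero, one_mul, add_zero]
    rw [add_comm]
    congr 1
    apply Finset.sum_congr rfl
    intro t _
    rw [show s + 1 + t = s + (t+1) by ring]
    ring
  have h2 : ∑ t ∈ Finset.range (f+1), p ^ t * γ (s + t)
      = cn p f γ s + p ^ f * γ s := by
    rw [Finset.sum_range_succ]
    unfold cn
    congr 1
    rw [hper s]
  omega

/-- unrolled: p^t c_{s+t} = c_s + (p^f - 1) Σ_{u<t} p^u γ(s+u) -/
lemma cn_unroll {p f : ℕ} (hp : 1 ≤ p) {γ : ℕ → ℕ} (hper : ∀ i, γ (i + f) = γ i) (s : ℕ) :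
    ∀ t, p ^ t * cn p f γ (s + t)
      = cn p f γ s + (p ^ f - 1) * ∑ u ∈ Finset.range t, p ^ u * γ (s + u) := by
  intro t
  induction t with
  | zero => simp
  | succ t ih =>
    have hq : 1 ≤ p ^ f := Nat.one_le_pow _ _ (by omega)
    have step := cn_step (p := p) hper (s + t)
    have h1 : p ^ (t+1) * cn p f γ (s + (t+1)) + p ^ t * γ (s+t)
        = p ^ t * cn p f γ (s + t) + p ^ t * (p ^ f * γ (s+t)) := by
      have : s + (t+1) = (s + t) + 1 := by ring
      rw [this, pow_succ]
      calc p ^ t * p * cn p f γ (s + t + 1) + p ^ t * γ (s+t)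
          = p ^ t * (γ (s+t) + p * cn p f γ (s + t + 1)) := by ring
      _ = p ^ t * (cn p f γ (s+t) + p ^ f * γ (s+t)) := by rw [step]
      _ = p ^ t * cn p f γ (s + t) + p ^ t * (p ^ f * γ (s+t)) := by ring
    rw [Finset.sum_range_succ, Nat.mul_add]
    have expand : (p ^ f - 1) * (p ^ t * γ (s + t)) + p ^ t * γ (s+t)
        = p ^ t * (p ^ f * γ (s+t)) := by
      rw [Nat.sub_one_mul]
      have hle : p ^ t * γ (s+t) ≤ p ^ f * (p ^ t * γ (s+t)) := Nat.le_mul_of_pos_left _ (by omega)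
      rw [show p ^ t * (p ^ f * γ (s+t)) = p ^ f * (p ^ t * γ (s+t)) by ring]
      omega
    have h1' : p ^ (t+1) * cn p f γ (s + t + 1) + p ^ t * γ (s+t)
        = p ^ t * cn p f γ (s + t) + p ^ t * (p ^ f * γ (s+t)) := h1
    have goal' : p ^ (t + 1) * cn p f γ (s + t + 1) =
        cn p f γ s + ((p ^ f - 1) * ∑ x ∈ Finset.range t, p ^ x * γ (s + x)
          + (p ^ f - 1) * (p ^ t * γ (s + t))) := by omega
    exact goal'

/-- positivity of cn for positive numbers -/
lemma cn_gam_pos {p f M n : ℕ} (hp : 2 ≤ p) (hf : 0 < f) (hn0 : 0 < n) (hn : n < p ^ M)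
    (s : ℕ) : 0 < cn p f (gam p f M n) s := by
  -- top digit is nonzero
  set j := Nat.log p n with hj
  have hpl : p ^ j ≤ n := by rw [hj]; exact Nat.pow_log_le_self p (by omega)
  have hjM : j < M := by
    by_contra h
    push_neg at h
    have h2 : p ^ M ≤ p ^ j := Nat.pow_le_pow_right (by omega) h
    omega
  have hdig : 0 < dig p j n := by
    have h1 : p ^ j ≤ n := Nat.pow_log_le_self p (by omega)
    have h2 : n < p ^ (j+1) := Nat.lt_pow_succ_log_self (by omega) n
    have h3 : 1 ≤ n / p ^ j := (Nat.one_le_div_iff (pow_pos (by omega) j)).mpr h1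
    have h4 : n / p ^ j < p := by
      rw [Nat.div_lt_iff_lt_mul (pow_pos (by omega) j)]
      calc n < p ^ (j+1) := h2
      _ = p * p ^ j := by ring
    unfold dig
    rw [Nat.mod_eq_of_lt h4]
    exact h3
  -- choose t < f with (s + t) % f = j % f
  set t := (j % f + f - s % f) % f with ht
  have htf : t < f := Nat.mod_lt _ hf
  have hst : (s + t) % f = j % f := by
    have h1 : s % f < f := Nat.mod_lt _ hf
    have h2 : j % f + f - s % f + s % f = j % f + f := by omega
    have e1 : s + (j % f + f - s % f) = j % f + f + f * (s / f) := by
      have e2 : f * (s / f) + s % f = s := Nat.div_add_mod s f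
      omega
    calc (s + t) % f = (s + (j % f + f - s % f)) % f := by rw [ht, Nat.add_mod_mod]
    _ = (j % f + f + f * (s / f)) % f := by rw [e1]
    _ = (j % f + f) % f := Nat.add_mul_mod_self_left _ _ _
    _ = j % f % f := Nat.add_mod_right _ _
    _ = j % f := Nat.mod_mod_of_dvd _ dvd_rfl
  have hterm : 0 < p ^ t * gam p f M n (s + t) := by
    apply Nat.mul_pos (pow_pos (by omega) t)
    unfold gam csm
    rw [hst]
    have : 0 < (if j % f = j % f then dig p j n else 0) := by simp [hdig]
    calc 0 < (if j % f = j % f then dig p j n else 0) := this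
    _ ≤ ∑ j' ∈ Finset.range M, if j' % f = j % f then dig p j' n else 0 :=
      Finset.single_le_sum (f := fun j' => if j' % f = j % f then dig p j' n else 0)
        (fun _ _ => Nat.zero_le _) (Finset.mem_range.mpr hjM)
  calc 0 < p ^ t * gam p f M n (s + t) := hterm
  _ ≤ cn p f (gam p f M n) s :=
    Finset.single_le_sum (f := fun t => p ^ t * gam p f M n (s+t))
      (fun _ _ => Nat.zero_le _) (Finset.mem_range.mpr htf)

lemma coprime_q1 {p f : ℕ} (hp : p.Prime) (hf : 0 < f) (s : ℕ) :
    Nat.Coprime (p ^ s) (p ^ f - 1) := by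
  apply Nat.Coprime.pow_left
  rw [hp.coprime_iff_not_dvd]
  intro hdvd
  have h1 : p ∣ p ^ f := dvd_pow_self p (by omega)
  have h2 : p ∣ p ^ f - (p ^ f - 1) := Nat.dvd_sub h1 hdvd
  have h3 : 1 ≤ p ^ f := Nat.one_le_pow _ _ hp.pos
  rw [show p ^ f - (p ^ f - 1) = 1 by omega] at h2
  exact Nat.Prime.one_lt hp |>.ne' (Nat.dvd_one.mp h2 ▸ rfl) |>.elim

lemma dvd_cn {p f M n : ℕ} (hp : p.Prime) (hf : 0 < f) (hn : n < p ^ M)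
    (hdvd : (p ^ f - 1) ∣ n) (s : ℕ) : (p ^ f - 1) ∣ cn p f (gam p f M n) s := by
  have h0 : (p ^ f - 1) ∣ cn p f (gam p f M n) 0 := by
    have hmc := modeq_cn (p := p) (f := f) (M := M) (n := n) hp.two_le hf hn
    exact (Nat.modEq_zero_iff_dvd).mp (hmc.symm.trans (Nat.modEq_zero_iff_dvd.mpr hdvd))
  have hu := cn_unroll (p := p) (f := f) hp.pos (gam_periodic p f M n) 0 s
  rw [zero_add] at hu
  have h2 : (p ^ f - 1) ∣ p ^ s * cn p f (gam p f M n) s := by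
    rw [hu]
    exact dvd_add h0 (Dvd.intro _ rfl)
  exact ((coprime_q1 hp hf s).symm.dvd_of_dvd_mul_left h2)

section extraction
variable {p f : ℕ} (γ : ℕ → ℕ)

/-- `g_s(t) = p^t - ∑_{u<t} p^u γ(s+u)` in ℤ -/
def gz (p : ℕ) (γ : ℕ → ℕ) (s t : ℕ) : ℤ :=
  (p : ℤ) ^ t - ∑ u ∈ Finset.range t, (p:ℤ) ^ u * (γ (s + u) : ℤ)

def mz (p f : ℕ) (hf : 0 < f) (γ : ℕ → ℕ) (s : ℕ) : ℤ :=
  (Finset.range f).sup' (Finset.nonempty_range_iff.mpr hf.ne') (gz p γ s)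

variable (hp : 2 ≤ p) (hf : 0 < f) (hper : ∀ i, γ (i + f) = γ i)

lemma gz_zero (s : ℕ) : gz p γ s 0 = 1 := by simp [gz]

lemma gz_succ (s t : ℕ) : gz p γ s (t + 1) = p * gz p γ (s+1) t - γ s := by
  unfold gz
  rw [Finset.sum_range_succ']
  push_cast
  rw [pow_succ]
  have : ∀ u, (p:ℤ) ^ (u+1) * (γ (s + (u+1)) : ℤ) = (p:ℤ) * ((p:ℤ)^u * (γ (s+1+u) : ℤ)) := by
    intro u
    rw [show s + (u+1) = s + 1 + u by ring]
    ring
  rw [Finset.sum_congr rfl (fun u _ => this u), ← Finset.mul_sum]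
  simp only [add_zero, pow_zero, one_mul]
  ring

include hper in
lemma gz_periodic (s t : ℕ) : gz p γ (s + f) t = gz p γ s t := by
  unfold gz
  congr 1
  apply Finset.sum_congr rfl
  intro u _
  rw [show s + f + u = (s + u) + f by ring, hper]

include hp hper in
lemma gz_key (s t : ℕ) : ((p^f - 1 : ℕ) : ℤ) * gz p γ s t
    = (cn p f γ s : ℤ) + (p:ℤ)^t * (((p^f - 1 : ℕ) : ℤ) - (cn p f γ (s+t) : ℤ)) := by
  have hu := cn_unroll (by omega : 1 ≤ p) hper s t
  have hcast : ((p:ℤ))^t * (cn p f γ (s+t) : ℤ)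
      = (cn p f γ s : ℤ) + ((p^f - 1 : ℕ):ℤ) * ∑ u ∈ Finset.range t, (p:ℤ)^u * (γ (s+u) : ℤ) := by
    have := congrArg (Nat.cast : ℕ → ℤ) hu
    push_cast at this ⊢
    convert this using 2
  unfold gz
  rw [mul_sub]
  rw [show ((p^f - 1 : ℕ):ℤ) * ∑ u ∈ Finset.range t, (p:ℤ)^u * (γ (s+u) : ℤ)
      = (p:ℤ)^t * (cn p f γ (s+t) : ℤ) - (cn p f γ s : ℤ) by omega]
  ring


include hp hper in
lemma gz_f_le_one (s : ℕ) (hcs : p^f - 1 ≤ cn p f γ s) : gz p γ s f ≤ 1 := by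
  have hk := gz_key γ hp hper s 0
  -- simpler: direct: gz s f = p^f - cn γ s
  have hd : gz p γ s f = (p:ℤ)^f - (cn p f γ s : ℤ) := by
    unfold gz cn
    push_cast
    ring
  have h1 : ((p^f - 1 : ℕ):ℤ) ≤ (cn p f γ s : ℤ) := by exact_mod_cast hcs
  have h2 : ((p^f - 1 : ℕ):ℤ) = (p:ℤ)^f - 1 := by
    have : 1 ≤ p ^ f := Nat.one_le_pow _ _ (by omega)
    push_cast [this]
    ring
  omega

include hf in
lemma one_le_mz (s : ℕ) : 1 ≤ mz p f hf γ s := by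
  have := Finset.le_sup' (gz p γ s) (Finset.mem_range.mpr hf)
  rw [gz_zero] at this
  exact this

include hper in
lemma mz_periodic (s : ℕ) : mz p f hf γ (s + f) = mz p f hf γ s := by
  unfold mz
  apply Finset.sup'_congr _ rfl
  intro t _
  exact gz_periodic γ hper s t

include hp hf hper in
lemma mz_le (s : ℕ) : mz p f hf γ s ≤ p * mz p f hf γ (s+1) := by
  apply Finset.sup'_le
  intro t ht
  match t with
  | 0 =>
    rw [gz_zero]
    have h1 : (1:ℤ) ≤ mz p f hf γ (s+1) := one_le_mz γ hf (s+1)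
    nlinarith [h1]
  | (u+1) =>
    rw [gz_succ]
    have h1 : gz p γ (s+1) u ≤ mz p f hf γ (s+1) := by
      apply Finset.le_sup'
      rw [Finset.mem_range] at ht ⊢
      omega
    have h2 : (0:ℤ) ≤ (γ s : ℤ) := Int.natCast_nonneg _
    have h3 : (p:ℤ) * gz p γ (s+1) u ≤ (p:ℤ) * mz p f hf γ (s+1) := by
      apply mul_le_mul_of_nonneg_left h1
      positivity
    omega

include hp hf hper in
lemma mz_ge (s : ℕ) (hcs : p^f - 1 ≤ cn p f γ (s+f)) :
    p * mz p f hf γ (s+1) - γ s ≤ mz p f hf γ s := by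
  obtain ⟨u, hu, hval⟩ := Finset.exists_mem_eq_sup' (Finset.nonempty_range_iff.mpr hf.ne')
    (gz p γ (s+1))
  rw [Finset.mem_range] at hu
  have heq : p * mz p f hf γ (s+1) - γ s = gz p γ s (u+1) := by
    rw [gz_succ]
    unfold mz
    rw [← hval]
  rw [heq]
  by_cases hcase : u + 1 < f
  · exact Finset.le_sup' (gz p γ s) (Finset.mem_range.mpr hcase)
  · have huf : u + 1 = f := by omega
    rw [huf]
    have h1 : gz p γ s f ≤ 1 := by
      apply gz_f_le_one γ hp hper
      have : cn p f γ (s + f) = cn p f γ s := by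
        unfold cn
        apply Finset.sum_congr rfl
        intro t _
        rw [show s + f + t = (s + t) + f by ring, hper]
      omega
    calc gz p γ s f ≤ 1 := h1
    _ ≤ mz p f hf γ s := one_le_mz γ hf s


include hp hf hper in
lemma mz_bound (e : ℕ) (hc : ∀ s, (e+1) * (p^f - 1) ≤ cn p f γ s) (s : ℕ) :
    ((p^f - 1 : ℕ):ℤ) * mz p f hf γ s + e * ((p^f - 1 : ℕ):ℤ) ≤ (cn p f γ s : ℤ) := by
  have hQpos : (0:ℤ) ≤ ((p^f - 1 : ℕ):ℤ) := Int.natCast_nonneg _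
  have hmain : ((p^f - 1 : ℕ):ℤ) * mz p f hf γ s ≤ (cn p f γ s : ℤ) - e * ((p^f - 1 : ℕ):ℤ) := by
    obtain ⟨t, _, hval⟩ := Finset.exists_mem_eq_sup' (Finset.nonempty_range_iff.mpr hf.ne')
      (gz p γ s)
    rw [mz, hval, gz_key γ hp hper s t]
    have h1 : ((e+1) * (p^f - 1) : ℕ) ≤ (cn p f γ (s+t)) := hc (s+t)
    have h2 : ((e:ℤ)+1) * ((p^f - 1 : ℕ):ℤ) ≤ (cn p f γ (s+t) : ℤ) := by exact_mod_cast h1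
    have h3 : (1:ℤ) ≤ (p:ℤ)^t := one_le_pow₀ (by exact_mod_cast (by omega : 1 ≤ p))
    have h4 : ((p^f - 1 : ℕ):ℤ) - (cn p f γ (s+t) : ℤ) ≤ 0 := by nlinarith
    have h5 : (p:ℤ)^t * (((p^f - 1 : ℕ):ℤ) - (cn p f γ (s+t) : ℤ))
        ≤ 1 * (((p^f - 1 : ℕ):ℤ) - (cn p f γ (s+t) : ℤ)) :=
      mul_le_mul_of_nonpos_right h3 h4
    nlinarith
  omega

include hp hf hper in
/-- main extraction lemma -/
lemma exists_delta (e : ℕ) (hc : ∀ s, (e+1) * (p^f - 1) ≤ cn p f γ s) :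
    ∃ δ : ℕ → ℕ, (∀ i, δ (i + f) = δ i) ∧ (∀ s, δ s ≤ γ s) ∧
      (∀ s, (p^f - 1) ∣ cn p f δ s) ∧ (∀ s, 0 < cn p f δ s) ∧
      (∀ s, cn p f δ s + e * (p^f - 1) ≤ cn p f γ s) := by
  classical
  set m := mz p f hf γ with hm
  set δ : ℕ → ℕ := fun s => (p * m (s+1) - m s).toNat with hδ
  have hQ1 : 1 ≤ p ^ f - 1 := by
    have h2 : 2 ≤ p ^ f := by
      calc 2 = 2^1 := rfl
      _ ≤ p ^ f := Nat.pow_le_pow_left hp 1 |>.trans (Nat.pow_le_pow_right (by omega) hf)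
    omega
  have hnn : ∀ s, (0:ℤ) ≤ p * m (s+1) - m s := fun s => by
    have h := mz_le γ hp hf hper s; rw [← hm] at h; omega
  have hcoe : ∀ s, (δ s : ℤ) = p * m (s+1) - m s := fun s => Int.toNat_of_nonneg (hnn s)
  have hδper : ∀ i, δ (i + f) = δ i := by
    intro i
    simp only [hδ]
    rw [show i + f + 1 = (i+1) + f by ring, hm]
    rw [mz_periodic γ hf hper, mz_periodic γ hf hper]
  have hδle : ∀ s, δ s ≤ γ s := by
    intro s
    have hge := mz_ge γ hp hf hper s (by
      have := hc (s + f)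
      calc p ^ f - 1 ≤ (e+1) * (p^f-1) := Nat.le_mul_of_pos_left _ (by omega)
      _ ≤ cn p f γ (s+f) := this)
    rw [← hm] at hge
    simp only [hδ]
    exact Int.toNat_le.mpr (by omega)
  -- telescope
  have htel : ∀ s, (cn p f δ s : ℤ) = ((p^f - 1:ℕ) : ℤ) * m s := by
    intro s
    have h0 : (cn p f δ s : ℤ) = ∑ t ∈ Finset.range f, (p:ℤ)^t * (δ (s+t) : ℤ) := by
      unfold cn; push_cast; ring
    rw [h0]
    have h1 : ∀ t ∈ Finset.range f, (p:ℤ)^t * (δ (s+t) : ℤ)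
        = (p:ℤ)^(t+1) * m (s+(t+1)) - (p:ℤ)^t * m (s+t) := by
      intro t _
      rw [hcoe (s+t), show s + t + 1 = s + (t+1) by ring]
      ring
    rw [Finset.sum_congr rfl h1]
    rw [Finset.sum_range_sub (fun t => (p:ℤ)^t * m (s+t))]
    rw [show s + f = s + f by rfl]
    have hper' : m (s + f) = m s := by rw [hm]; exact mz_periodic γ hf hper s
    rw [hper']
    have h2 : ((p^f - 1 : ℕ):ℤ) = (p:ℤ)^f - 1 := by
      have : 1 ≤ p ^ f := Nat.one_le_pow _ _ (by omega)
      push_cast [this]; ring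
    rw [h2]
    simp only [add_zero, pow_zero, one_mul]
    ring
  have hm1 : ∀ s, (1:ℤ) ≤ m s := fun s => by rw [hm]; exact one_le_mz γ hf s
  refine ⟨δ, hδper, hδle, ?_, ?_, ?_⟩
  · intro s
    have h := htel s
    have hmnn : (0:ℤ) ≤ m s := by linarith [hm1 s]
    have hcast : (((p^f - 1) * (m s).toNat : ℕ) : ℤ) = (cn p f δ s : ℤ) := by
      rw [Nat.cast_mul, Int.toNat_of_nonneg hmnn, h]
    have hc2 : (p^f - 1) * (m s).toNat = cn p f δ s := by exact_mod_cast hcast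
    rw [← hc2]
    exact Dvd.intro _ rfl
  · intro s
    have h := htel s
    have h2 : (1:ℤ) ≤ ((p^f-1:ℕ):ℤ) * m s := by
      have := hm1 s
      have hQz : (1:ℤ) ≤ ((p^f-1:ℕ):ℤ) := by exact_mod_cast hQ1
      nlinarith
    omega
  · intro s
    have h := htel s
    have hb := mz_bound γ hp hf hper e hc s
    rw [← hm] at hb
    have : ((cn p f δ s : ℕ) : ℤ) + (e:ℤ) * ((p^f-1:ℕ):ℤ) ≤ (cn p f γ s : ℤ) := by
      rw [h]; exact hb
    exact_mod_cast this

end extraction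

lemma add_one_mod (f x : ℕ) : (x % f + 1) % f = (x + 1) % f := by
  conv_rhs => rw [Nat.add_mod]
  rw [Nat.add_mod_mod]

lemma mod_succ_iff {f i j : ℕ} (hf : 0 < f) (hi : i < f) :
    (j + 1) % f = (i + 1) % f ↔ j % f = i := by
  constructor
  · intro h
    have h2 : j ≡ i [MOD f] := Nat.ModEq.add_right_cancel' 1 h
    rw [Nat.ModEq] at h2
    rw [h2, Nat.mod_eq_of_lt hi]
  · intro h
    have h2 : j ≡ i [MOD f] := by
      rw [Nat.ModEq, h, Nat.mod_eq_of_lt hi]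
    exact h2.add_right 1

lemma zero_mod_succ_iff {f i : ℕ} (hf : 0 < f) (hi : i < f) :
    0 % f = (i + 1) % f ↔ i + 1 = f := by
  rw [Nat.zero_mod]
  constructor
  · intro h
    by_contra hne
    have h1 : i + 1 < f := by omega
    rw [Nat.mod_eq_of_lt h1] at h
    omega
  · intro h
    rw [h, Nat.mod_self]

lemma csm_rec {p f M n : ℕ} (hf : 0 < f) (i : ℕ) (hi : i < f) :
    csm p f (M+1) n ((i+1) % f)
      = (if i + 1 = f then dig p 0 n else 0) + csm p f M (n / p) i := by
  unfold csm
  rw [Finset.sum_range_succ']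
  have h1 : ∀ j ∈ Finset.range M,
      (if (j+1) % f = (i+1) % f then dig p (j+1) n else 0)
      = (if j % f = i then dig p j (n/p) else 0) := by
    intro j _
    rw [dig_succ]
    by_cases h : j % f = i
    · rw [if_pos h, if_pos ((mod_succ_iff hf hi).mpr h)]
    · rw [if_neg h, if_neg (fun hc => h ((mod_succ_iff hf hi).mp hc))]
  rw [Finset.sum_congr rfl h1]
  by_cases h : i + 1 = f
  · rw [if_pos ((zero_mod_succ_iff hf hi).mpr h), if_pos h]
    ring
  · rw [if_neg (fun hc => h ((zero_mod_succ_iff hf hi).mp hc)), if_neg h]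
    ring

lemma exists_realize {p f : ℕ} (hp : 2 ≤ p) (hf : 0 < f) :
    ∀ M n, n < p ^ M → ∀ δ : ℕ → ℕ, (∀ i, i < f → δ i ≤ csm p f M n i) →
    ∃ x, x < p ^ M ∧ (∀ j, dig p j x ≤ dig p j n) ∧ (∀ i, i < f → csm p f M x i = δ i) := by
  intro M
  induction M with
  | zero =>
    intro n hn δ hδ
    refine ⟨0, by simpa using hn, fun j => by simp [dig], fun i hi => ?_⟩
    have := hδ i hi
    simp only [csm, Finset.range_zero, Finset.sum_empty] at this ⊢
    omega
  | succ M ih =>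
    intro n hn δ hδ
    set r := dig p 0 n with hr
    set b := min r (δ 0) with hb
    set δ' : ℕ → ℕ := fun i => if i + 1 = f then δ 0 - b else δ ((i+1) % f) with hδ'
    have hnp : n / p < p ^ M := by
      rw [Nat.div_lt_iff_lt_mul (by omega)]
      calc n < p ^ (M+1) := hn
      _ = p ^ M * p := by ring
    have hδ'le : ∀ i, i < f → δ' i ≤ csm p f M (n/p) i := by
      intro i hi
      have hrec := csm_rec (p := p) (M := M) (n := n) hf i hi
      have hbd := hδ ((i+1) % f) (Nat.mod_lt _ hf)
      rw [hrec] at hbd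
      simp only [hδ']
      by_cases h : i + 1 = f
      · rw [if_pos h]
        rw [if_pos h] at hbd
        have h0 : (i+1) % f = 0 := by rw [h, Nat.mod_self]
        rw [h0] at hbd
        omega
      · rw [if_neg h]
        rw [if_neg h] at hbd
        omega
    obtain ⟨x', hx'lt, hx'dig, hx'csm⟩ := ih (n/p) hnp δ' hδ'le
    refine ⟨p * x' + b, ?_, ?_, ?_⟩
    · have hblt : b < p := by
        have : r < p := Nat.mod_lt _ (by omega)
        omega
      calc p * x' + b < p * x' + p := by omega
      _ = p * (x' + 1) := by ring
      _ ≤ p * p ^ M := by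
        apply Nat.mul_le_mul_left
        omega
      _ = p ^ (M+1) := by ring
    · intro j
      match j with
      | 0 =>
        rw [dig_zero, Nat.mul_add_mod]
        have hblt : b < p := by
          have : r < p := Nat.mod_lt _ (by omega)
          omega
        rw [Nat.mod_eq_of_lt hblt, ← hr]
        omega
      | j+1 =>
        rw [dig_succ, dig_succ]
        have hdiv : (p * x' + b) / p = x' := by
          rw [Nat.mul_add_div (by omega)]
          have hblt : b < p := by
            have : r < p := Nat.mod_lt _ (by omega)
            omega
          rw [Nat.div_eq_of_lt hblt]
          omega
        rw [hdiv]
        exact hx'dig j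
    · intro c hc
      set i := (c + f - 1) % f with hi
      have hif : i < f := Nat.mod_lt _ hf
      have hci : (i + 1) % f = c := by
        rw [hi, add_one_mod, show c + f - 1 + 1 = c + f by omega, Nat.add_mod_right,
          Nat.mod_eq_of_lt hc]
      have hrec := csm_rec (p := p) (M := M) (n := p * x' + b) hf i hif
      rw [hci] at hrec
      rw [hrec]
      have hdig0 : dig p 0 (p * x' + b) = b := by
        rw [dig_zero, Nat.mul_add_mod]
        have hblt : b < p := by
          have : r < p := Nat.mod_lt _ (by omega)
          omega
        exact Nat.mod_eq_of_lt hblt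
      have hdiv : (p * x' + b) / p = x' := by
        rw [Nat.mul_add_div (by omega)]
        have hblt : b < p := by
          have : r < p := Nat.mod_lt _ (by omega)
          omega
        rw [Nat.div_eq_of_lt hblt]
        omega
      rw [hdig0, hdiv, hx'csm i hif]
      simp only [hδ']
      by_cases h : i + 1 = f
      · rw [if_pos h, if_pos h]
        have hc0 : c = 0 := by
          rw [← hci, h, Nat.mod_self]
        rw [hc0]
        have hble : b ≤ δ 0 := by omega
        omega
      · rw [if_neg h, if_neg h, hci]
        omega

lemma periodic_mod {f : ℕ} (hf : 0 < f) {δ : ℕ → ℕ} (h : ∀ i, δ (i + f) = δ i) :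
    ∀ i, δ i = δ (i % f) := by
  intro i
  induction i using Nat.strong_induction_on with
  | _ i ih =>
    by_cases hi : i < f
    · rw [Nat.mod_eq_of_lt hi]
    · push_neg at hi
      have h1 : i = (i - f) + f := by omega
      calc δ i = δ (i - f + f) := by rw [← h1]
      _ = δ (i - f) := h _
      _ = δ ((i - f) % f) := ih _ (by omega)
      _ = δ (i % f) := by rw [← Nat.mod_eq_sub_mod hi]

lemma csm_add {p f M x y n : ℕ} (h : ∀ j, dig p j x + dig p j y = dig p j n) (i : ℕ) :
    csm p f M x i + csm p f M y i = csm p f M n i := by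
  unfold csm
  rw [← Finset.sum_add_distrib]
  apply Finset.sum_congr rfl
  intro j _
  by_cases hc : j % f = i
  · simp [hc, h j]
  · simp [hc]

lemma hQ1pos {p f : ℕ} (hp : 2 ≤ p) (hf : 0 < f) : 1 ≤ p ^ f - 1 := by
  have h2 : 2 ≤ p ^ f := by
    calc 2 = 2^1 := rfl
    _ ≤ p ^ f := Nat.pow_le_pow_left hp 1 |>.trans (Nat.pow_le_pow_right (by omega) hf)
  omega

/-- main existence of composition -/
lemma exists_composition {p f M : ℕ} (hp : p.Prime) (hf : 0 < f) :
    ∀ d, 0 < d → ∀ n, n < p ^ M →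
      (∀ s, (d - 1) * (p^f - 1) ≤ cn p f (gam p f M n) s) →
      ∃ Y : Fin d → ℕ, (∑ i, Y i) = n ∧ (∀ j, ∑ i, dig p j (Y i) = dig p j n) ∧
        (∀ i : Fin d, (i:ℕ) + 1 < d → 0 < Y i ∧ (p^f - 1) ∣ Y i) := by
  intro d
  induction d with
  | zero => omega
  | succ d ihd =>
    intro _ n hn hc
    by_cases hd0 : d = 0
    · subst hd0
      refine ⟨fun _ => n, by simp, fun j => by simp, fun i hi => by simp at hi⟩
    -- d ≥ 1
    have hdpos : 0 < d := by omega
    have hp2 : 2 ≤ p := hp.two_le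
    have hc' : ∀ s, ((d - 1) + 1) * (p^f - 1) ≤ cn p f (gam p f M n) s := by
      intro s
      have := hc s
      have he : (d + 1 - 1) = (d - 1) + 1 := by omega
      rw [he] at this
      exact this
    obtain ⟨δ, hδper, hδle, hδdvd, hδpos, hδbd⟩ :=
      exists_delta (gam p f M n) hp2 hf (gam_periodic p f M n) (d - 1) hc'
    obtain ⟨x, hxlt, hxdig, hxcsm⟩ := exists_realize hp2 hf M n hn δ (by
      intro i hi
      have := hδle i
      unfold gam at this
      rw [Nat.mod_eq_of_lt hi] at this
      exact this)
    have hgamx : ∀ i, gam p f M x i = δ i := by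
      intro i
      unfold gam
      rw [hxcsm (i % f) (Nat.mod_lt _ hf), ← periodic_mod hf hδper i]
    have hcnx : ∀ s, cn p f (gam p f M x) s = cn p f δ s := by
      intro s
      unfold cn
      exact Finset.sum_congr rfl (fun t _ => by rw [hgamx])
    obtain ⟨hxle, hdigadd⟩ := sub_digits hp2 hn hxlt hxdig
    set n' := n - x with hn'
    have hn'lt : n' < p ^ M := by omega
    have hcsm' : ∀ i, csm p f M x i + csm p f M n' i = csm p f M n i :=
      csm_add hdigadd
    have hcn' : ∀ s, cn p f (gam p f M x) s + cn p f (gam p f M n') s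
        = cn p f (gam p f M n) s := by
      intro s
      unfold cn gam
      rw [← Finset.sum_add_distrib]
      apply Finset.sum_congr rfl
      intro t _
      rw [← Nat.mul_add, hcsm']
    have hc'' : ∀ s, (d - 1) * (p^f - 1) ≤ cn p f (gam p f M n') s := by
      intro s
      have h1 := hδbd s
      have h2 := hcn' s
      have h3 := hcnx s
      omega
    obtain ⟨Y', hY'sum, hY'dig, hY'cond⟩ := ihd hdpos n' hn'lt hc''
    refine ⟨Fin.cons x Y', ?_, ?_, ?_⟩
    · rw [Fin.sum_univ_succ]
      simp only [Fin.cons_zero, Fin.cons_succ]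
      rw [hY'sum]
      omega
    · intro j
      rw [Fin.sum_univ_succ]
      simp only [Fin.cons_zero, Fin.cons_succ]
      rw [hY'dig j]
      exact hdigadd j
      
    · intro i
      refine Fin.cases ?_ ?_ i
      · intro _
        simp only [Fin.cons_zero]
        constructor
        · by_contra hx0
          push_neg at hx0
          have hx00 : x = 0 := by omega
          rw [hx00] at hcnx
          have hzero : cn p f (gam p f M 0) 0 = 0 := by
            apply Finset.sum_eq_zero
            intro t _
            have : csm p f M 0 ((0 + t) % f) = 0 := by
              apply Finset.sum_eq_zero
              intro j _
              simp [dig]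
            simp only [gam, this, Nat.mul_zero]
          have := hδpos 0
          rw [← hcnx 0] at this
          omega
        · have hmod := modeq_cn (p := p) (f := f) (M := M) (n := x) hp2 hf hxlt
          have hdvd0 : (p ^ f - 1) ∣ cn p f (gam p f M x) 0 := by
            rw [hcnx 0]; exact hδdvd 0
          exact (Nat.modEq_zero_iff_dvd).mp
            (hmod.trans ((Nat.modEq_zero_iff_dvd).mpr hdvd0))
      · intro j hj
        simp only [Fin.cons_succ]
        apply hY'cond j
        simp only [Fin.val_succ] at hj
        omega

/-- forward: a composition forces the digit-sum bounds -/
lemma forward_bound {p f M N d : ℕ} (hp : p.Prime) (hf : 0 < f) (hM : N < p ^ M)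
    (Y : Fin d → ℕ) (hsum : ∑ i, Y i = N)
    (hdig : ∀ j, ∑ i, dig p j (Y i) = dig p j N)
    (hcond : ∀ i : Fin d, (i:ℕ) + 1 < d → 0 < Y i ∧ (p^f - 1) ∣ Y i) :
    ∀ s, (d - 1) * (p ^ f - 1) ≤ cn p f (gam p f M N) s := by
  intro s
  have hYle : ∀ i, Y i ≤ N := by
    intro i
    rw [← hsum]
    exact Finset.single_le_sum (f := Y) (fun _ _ => Nat.zero_le _) (Finset.mem_univ i)
  have hsplit : cn p f (gam p f M N) s = ∑ i, cn p f (gam p f M (Y i)) s := by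
    unfold cn
    rw [Finset.sum_comm]
    apply Finset.sum_congr rfl
    intro t _
    rw [← Finset.mul_sum]
    congr 1
    exact (csm_sum_tuple Y hdig _).symm
  rw [hsplit]
  have hlow : ∀ i : Fin d, (if (i:ℕ) + 1 < d then p^f - 1 else 0)
      ≤ cn p f (gam p f M (Y i)) s := by
    intro i
    by_cases hi : (i:ℕ) + 1 < d
    · rw [if_pos hi]
      obtain ⟨hpos, hdvd⟩ := hcond i hi
      have h1 := dvd_cn hp hf (lt_of_le_of_lt (hYle i) hM) hdvd s
      have h2 := cn_gam_pos hp.two_le hf hpos (lt_of_le_of_lt (hYle i) hM) s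
      exact Nat.le_of_dvd h2 h1
    · rw [if_neg hi]
      exact Nat.zero_le _
  calc (d - 1) * (p ^ f - 1)
      = ∑ i : Fin d, (if (i:ℕ) + 1 < d then p^f - 1 else 0) := by
        rw [Finset.sum_ite, Finset.sum_const, Finset.sum_const]
        simp only [smul_eq_mul, Nat.mul_zero, add_zero]
        congr 1
        -- card of filter = d - 1
        match d with
        | 0 => simp
        | e+1 =>
          have hfil : (Finset.filter (fun i : Fin (e+1) => (i:ℕ) + 1 < e+1) Finset.univ)
              = Finset.univ.erase (Fin.last e) := by
            ext i
            simp only [Finset.mem_filter, Finset.mem_univ, true_and, Finset.mem_erase]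
            constructor
            · intro h
              refine ⟨fun hlast => ?_, trivial⟩
              rw [hlast] at h
              simp [Fin.val_last] at h
            · rintro ⟨hne, -⟩
              have hlt : (i:ℕ) < e + 1 := i.isLt
              have hne' : (i:ℕ) ≠ e := by
                intro hh
                apply hne
                apply Fin.ext
                simp [Fin.val_last, hh]
              omega
          rw [hfil, Finset.card_erase_of_mem (Finset.mem_univ _)]
          simp
  _ ≤ ∑ i, cn p f (gam p f M (Y i)) s := Finset.sum_le_sum (fun i _ => hlow i)

lemma gamma_eq_csm (p f N : ℕ) (i : Fin f) :
    Gamma p f N i = csm p f (Nat.log p N + 1) N (i : ℕ) := rfl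

/-- alpha in terms of cn -/
lemma alpha_eq {p f N : ℕ} (hp : 2 ≤ p) (hf : 0 < f) (α : Fin f → ℚ)
    (hα : Emap p α = fun i => (Gamma p f N i : ℚ)) (s : ℕ) :
    ((p ^ f - 1 : ℕ) : ℚ) * α ⟨s % f, Nat.mod_lt _ hf⟩
      = (cn p f (gam p f (Nat.log p N + 1) N) s : ℚ) := by
  set M := Nat.log p N + 1 with hM
  set A : ℕ → ℚ := fun s => α ⟨s % f, Nat.mod_lt _ hf⟩ with hA
  have hrec : ∀ s : ℕ, (p : ℚ) * A (s+1) = A s + (gam p f M N s : ℚ) := by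
    intro s
    have h1 := congrFun hα ⟨s % f, Nat.mod_lt _ hf⟩
    simp only [Emap] at h1
    have hidx : (⟨(s % f + 1) % f, Nat.mod_lt _ hf⟩ : Fin f) = ⟨(s+1) % f, Nat.mod_lt _ hf⟩ := by
      apply Fin.ext
      simp only
      exact add_one_mod f s
    rw [hidx] at h1
    have hg : (Gamma p f N ⟨s % f, Nat.mod_lt _ hf⟩ : ℚ) = (gam p f M N s : ℚ) := by
      rw [gamma_eq_csm]
      rfl
    rw [hg] at h1
    have : (p:ℚ) * A (s+1) - A s = (gam p f M N s : ℚ) := h1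
    linarith
  have hunroll : ∀ t : ℕ, (p:ℚ) ^ t * A (s + t)
      = A s + ∑ u ∈ Finset.range t, (p:ℚ) ^ u * (gam p f M N (s + u) : ℚ) := by
    intro t
    induction t with
    | zero => simp
    | succ t ih =>
      have h1 : (p:ℚ) ^ (t+1) * A (s + (t+1)) = (p:ℚ)^t * ((p:ℚ) * A ((s+t) + 1)) := by
        rw [show s + (t+1) = (s+t)+1 by ring]
        ring
      rw [h1, hrec (s+t), Finset.sum_range_succ]
      rw [mul_add, ih]
      ring
  have hAper : A (s + f) = A s := by
    simp only [hA]
    congr 1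
    apply Fin.ext
    simp only
    rw [Nat.add_mod_right]
  have h2 := hunroll f
  rw [hAper] at h2
  have hcncast : (cn p f (gam p f M N) s : ℚ)
      = ∑ u ∈ Finset.range f, (p:ℚ) ^ u * (gam p f M N (s + u) : ℚ) := by
    unfold cn
    push_cast
    ring
  rw [hcncast]
  have hq : ((p ^ f - 1 : ℕ) : ℚ) = (p:ℚ)^f - 1 := by
    have : 1 ≤ p ^ f := Nat.one_le_pow _ _ (by omega)
    push_cast [this]
    ring
  rw [hq]
  linarith [h2]

end S16

/-- with `E α = Γ(N)`, `W_d(N) ≠ ∅` iff `min α_i ≥ d - 1`. -/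
theorem Wset_nonempty_iff
    (p f : ℕ) (hp : p.Prime) (hf : 0 < f) (N : ℕ) (hN : 0 < N)
    (α : Fin f → ℚ) (hα : Emap p α = fun i => (Gamma p f N i : ℚ)) :
    ∀ d : ℕ, 0 < d → ((Wset p (p ^ f) d N).Nonempty ↔ ∀ i, (d : ℚ) - 1 ≤ α i) := by

  intro d hd
  have hp2 : 2 ≤ p := hp.two_le
  set M := Nat.log p N + 1 with hM
  have hNM : N < p ^ M := Nat.lt_pow_succ_log_self (by omega) N
  have hQpos : (0:ℚ) < ((p ^ f - 1 : ℕ) : ℚ) := by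
    have := S16.hQ1pos hp2 hf
    exact_mod_cast Nat.lt_of_lt_of_le Nat.zero_lt_one this
  constructor
  · rintro ⟨Y, hYW⟩
    obtain ⟨⟨hsum, hdig⟩, hcond⟩ := hYW
    have hdig' : ∀ j, ∑ i, S16.dig p j (Y i) = S16.dig p j N := hdig
    have hb := S16.forward_bound hp hf hNM Y hsum hdig' hcond
    intro i
    have ha := S16.alpha_eq hp2 hf α hα (i : ℕ)
    have hidx : (⟨(i:ℕ) % f, Nat.mod_lt _ hf⟩ : Fin f) = i :=
      Fin.ext (by simp [Nat.mod_eq_of_lt i.isLt])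
    rw [hidx] at ha
    have hbi := hb (i : ℕ)
    have hcast : (((d - 1) * (p ^ f - 1) : ℕ) : ℚ)
        ≤ ((S16.cn p f (S16.gam p f M N) (i:ℕ) : ℕ) : ℚ) := Nat.cast_le.mpr hbi
    rw [← ha, Nat.cast_mul, Nat.cast_sub hd] at hcast
    have h2 : ((d:ℚ) - 1) * ((p ^ f - 1 : ℕ) : ℚ) ≤ α i * ((p ^ f - 1 : ℕ) : ℚ) := by
      push_cast at hcast ⊢
      linarith
    exact le_of_mul_le_mul_right h2 hQpos
  · intro hge
    have hbound : ∀ s, (d - 1) * (p ^ f - 1) ≤ S16.cn p f (S16.gam p f M N) s := by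
      intro s
      have ha := S16.alpha_eq hp2 hf α hα s
      have h1 : ((d:ℚ) - 1) ≤ α ⟨s % f, Nat.mod_lt _ hf⟩ := hge _
      have h3 : (((d - 1) * (p ^ f - 1) : ℕ) : ℚ)
          ≤ ((S16.cn p f (S16.gam p f M N) s : ℕ) : ℚ) := by
        rw [← ha, Nat.cast_mul, Nat.cast_sub hd]
        push_cast
        nlinarith
      exact_mod_cast h3
    obtain ⟨Y, hsum, hdig, hcond⟩ := S16.exists_composition hp hf d hd N hNM hbound
    exact ⟨Y, ⟨⟨hsum, hdig⟩, hcond⟩⟩
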